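/- Let {b_n}, {d_n} be positive integer sequences with 1 < d_n < b_n and 2 ≤ b_n/d_n ∈ ℤ, and let ρ_n = ∏_{j<n}b_j. Then the set Λ = ⋃_{L=1}^∞ ( {∑_{n=1}^L a_n ρ_n : a_n ∈ ℤ, 0 ≤ a_n < d_n} ) has the property that for any two distinct λ, λ' ∈ Λ, the difference λ - λ' is a nonzero integer and the Riesz product Fourier transform μ̂(λ - λ') = ∏_{n=1}^∞ H_{d_n}((λ-λ')/(d_n ρ_n)) vanishes, where H_m(ξ) = (1/m)∑_{j=0}^{m-1}e^{-2πijξ}. -/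

import Mathlib

/-- The Dirichlet-type kernel `H_m(ξ) = (1/m) ∑_{j=0}^{m-1} e^{-2πijξ}`. -/
noncomputable def Hker (m : ℕ) (ξ : ℝ) : ℂ :=
  (1 / m : ℂ) * ∑ j ∈ Finset.range m, Complex.exp (-2 * Real.pi * Complex.I * j * ξ)

/-!
Write `λ - λ' = ∑ cₙ ρₙ` with digit differences `|cₙ| < dₙ` and let `n₀` be the first index with
`c_{n₀} ≠ 0`. Because `d_{n₀} ∣ b_{n₀}`, every `ρₙ` with `n > n₀` is a multiple of
`d_{n₀} ρ_{n₀}`, so `(λ - λ') / (d_{n₀} ρ_{n₀}) = S / d_{n₀}` with `S ≡ c_{n₀} ≢ 0 (mod d_{n₀})`.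
At such a point `H_{d_{n₀}}` is the average of the powers of a `d_{n₀}`-th root of unity other
than `1`, hence vanishes, and so does the infinite product.
-/

open Finset Complex
open scoped Real

theorem geom_sum_eq_zero_of_pow_eq_one {K : Type*} [Field K] {x : K} {m : ℕ}
    (hxm : x ^ m = 1) (hx : x ≠ 1) : ∑ i ∈ range m, x ^ i = 0 := by
  rw [geom_sum_eq hx, hxm, sub_self, zero_div]

theorem Hker_intCast_div_eq_zero {m : ℕ} {k : ℤ} (hk : ¬ (m : ℤ) ∣ k) :
    Hker m (k / m) = 0 := by
  rcases eq_or_ne m 0 with rfl | hm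
  · simp [Hker]
  set z := exp (-2 * π * I * (k / m))
  have hpow : ∀ j : ℕ, exp (-2 * π * I * j * ((k / m : ℝ) : ℂ)) = z ^ j := fun j => by
    rw [← exp_nat_mul]; push_cast; ring_nf
  have hzm : z ^ m = 1 := by
    rw [← exp_nat_mul, ← exp_int_mul_two_pi_mul_I (-k)]
    congr 1
    field_simp
    push_cast
    ring
  have hz1 : z ≠ 1 := by
    rw [Ne, exp_eq_one_iff]
    rintro ⟨n, hn⟩
    refine hk ⟨-n, ?_⟩
    have hkn : (k : ℂ) = m * (-n : ℤ) := by
      field_simp at hn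
      push_cast
      linear_combination -hn
    exact_mod_cast hkn
  rw [Hker, sum_congr rfl fun j _ => hpow j, geom_sum_eq_zero_of_pow_eq_one hzm hz1, mul_zero]

theorem exists_not_dvd_of_sum_mul_prod_range_ne_zero (b d c : ℕ → ℤ) (hdb : ∀ n, d n ∣ b n)
    (N : ℕ) (hc : ∀ n < N, |c n| < d n)
    (hne : ∑ n ∈ range N, c n * ∏ j ∈ range n, b j ≠ 0) :
    ∃ n₀ S, ¬ d n₀ ∣ S ∧
      ∑ n ∈ range N, c n * ∏ j ∈ range n, b j = (∏ j ∈ range n₀, b j) * S := by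
  induction N generalizing b d c with
  | zero => simp at hne
  | succ N ih =>
    have horner : ∑ n ∈ range (N + 1), c n * ∏ j ∈ range n, b j
        = c 0 + b 0 * ∑ n ∈ range N, c (n + 1) * ∏ j ∈ range n, b (j + 1) := by
      rw [sum_range_succ', add_comm, mul_sum]
      simp only [prod_range_succ', prod_range_zero, mul_one]
      exact congrArg _ (sum_congr rfl fun n _ => by ring)
    rw [horner] at hne ⊢
    by_cases hc0 : c 0 = 0
    · rw [hc0, zero_add] at hne ⊢
      obtain ⟨n₀, S, hS, heq⟩ := ih (fun n => b (n + 1)) (fun n => d (n + 1)) (fun n => c (n + 1))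
        (fun n => hdb _) (fun n hn => hc _ (by omega)) (right_ne_zero_of_mul hne)
      exact ⟨n₀ + 1, S, hS, by rw [heq, prod_range_succ', ← mul_assoc, mul_comm (b 0)]⟩
    · refine ⟨0, _, fun hdvd => hc0 ?_, (one_mul _).symm⟩
      have hd0 : d 0 ∣ c 0 := (dvd_add_left ((hdb 0).mul_right _)).1 hdvd
      exact Int.eq_zero_of_abs_lt_dvd hd0 (hc 0 (by omega))

theorem sum_range_eq_sum_range_ite {M : Type*} [AddCommMonoid M] (f : ℕ → M) {L N : ℕ}
    (hLN : L ≤ N) : ∑ n ∈ range L, f n = ∑ n ∈ range N, if n < L then f n else 0 := by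
  rw [← sum_filter]
  congr 1
  ext n
  simp only [mem_range, mem_filter]
  omega

theorem exists_digits_of_le {d : ℕ → ℕ} (hd : ∀ n, 0 < d n) (ρ : ℕ → ℕ) {L N : ℕ} (hLN : L ≤ N)
    {a : ℕ → ℕ} (ha : ∀ n < L, a n < d n) :
    ∃ A : ℕ → ℕ, (∀ n, A n < d n) ∧
      ∑ n ∈ range L, (a n : ℝ) * ρ n = ∑ n ∈ range N, (A n : ℝ) * ρ n := by
  refine ⟨fun n => if n < L then a n else 0, fun n => ?_, ?_⟩
  · dsimp only
    split_ifs with hn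
    exacts [ha n hn, hd n]
  · rw [sum_range_eq_sum_range_ite _ hLN]
    refine sum_congr rfl fun n _ => ?_
    rw [Nat.cast_ite, Nat.cast_zero, ite_mul, zero_mul]

theorem stmt12_general (b d : ℕ → ℕ)
    (h1 : ∀ n, 1 < d n)
    (h3 : ∀ n, d n ∣ b n)
    (ρ : ℕ → ℕ) (hρ : ∀ n, ρ n = ∏ j ∈ Finset.range n, b j)
    (Λ : Set ℝ)
    (hΛ : Λ = {x : ℝ | ∃ (L : ℕ) (a : ℕ → ℕ), (∀ n < L, a n < d n) ∧
        x = ∑ n ∈ Finset.range L, (a n : ℝ) * ρ n}) :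
    ∀ lam ∈ Λ, ∀ lam' ∈ Λ, lam ≠ lam' →
      (∃ m : ℤ, m ≠ 0 ∧ lam - lam' = (m : ℝ)) ∧
      (∏' n : ℕ, Hker (d n) ((lam - lam') / (d n * ρ n))) = 0 := by
  subst hΛ
  rintro _ ⟨L, a, ha, rfl⟩ _ ⟨L', a', ha', rfl⟩ hne
  have hd : ∀ n, 0 < d n := fun n => one_pos.trans (h1 n)
  obtain ⟨A, hA, hsum⟩ := exists_digits_of_le hd ρ (le_max_left L L') ha
  obtain ⟨A', hA', hsum'⟩ := exists_digits_of_le hd ρ (le_max_right L L') ha'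
  set δ : ℤ := ∑ n ∈ range (max L L'), ((A n : ℤ) - A' n) * ∏ j ∈ range n, (b j : ℤ)
  have hδ : ∑ n ∈ range L, (a n : ℝ) * ρ n - ∑ n ∈ range L', (a' n : ℝ) * ρ n = δ := by
    rw [hsum, hsum', ← sum_sub_distrib]
    simp only [δ, hρ, ← sub_mul]
    push_cast
    rfl
  have hδ0 : δ ≠ 0 := fun h => hne (sub_eq_zero.1 (by rw [hδ, h, Int.cast_zero]))
  obtain ⟨n₀, S, hS, hδS⟩ := exists_not_dvd_of_sum_mul_prod_range_ne_zero _ (fun n => d n) _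
    (fun n => Int.natCast_dvd_natCast.2 (h3 n)) _
    (fun n _ => abs_sub_lt_iff.2 ⟨by linarith [hA n], by linarith [hA' n]⟩) hδ0
  refine ⟨⟨δ, hδ0, hδ⟩, tprod_of_exists_eq_zero ⟨n₀, ?_⟩⟩
  have hρδ : (δ : ℝ) = ρ n₀ * S := by simp only [δ, hδS, hρ]; push_cast; rfl
  have hρ0 : (ρ n₀ : ℝ) ≠ 0 := left_ne_zero_of_mul (hρδ ▸ Int.cast_ne_zero.2 hδ0)
  rw [hδ, hρδ, mul_comm (d n₀ : ℝ), mul_div_mul_left _ _ hρ0]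
  exact Hker_intCast_div_eq_zero hS

/-- for distinct `λ, λ'` in the candidate spectrum
`Λ = ⋃_L {∑_{n=1}^L aₙρₙ : 0 ≤ aₙ < dₙ}`, the difference `λ - λ'` is a nonzero
integer at which the Riesz product Fourier transform vanishes. -/
theorem stmt12 (b d : ℕ → ℕ)
    (h1 : ∀ n, 1 < d n) (h2 : ∀ n, d n < b n)
    (h3 : ∀ n, d n ∣ b n) (h4 : ∀ n, 2 ≤ b n / d n)
    (ρ : ℕ → ℕ) (hρ : ∀ n, ρ n = ∏ j ∈ Finset.range n, b j)
    (Λ : Set ℝ)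
    (hΛ : Λ = {x : ℝ | ∃ (L : ℕ) (a : ℕ → ℕ), (∀ n < L, a n < d n) ∧
        x = ∑ n ∈ Finset.range L, (a n : ℝ) * ρ n}) :
    ∀ lam ∈ Λ, ∀ lam' ∈ Λ, lam ≠ lam' →
      (∃ m : ℤ, m ≠ 0 ∧ lam - lam' = (m : ℝ)) ∧
      (∏' n : ℕ, Hker (d n) ((lam - lam') / (d n * ρ n))) = 0 :=
  stmt12_general b d h1 h3 ρ hρ Λ hΛ
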